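/- arXiv:2206.09335 — 3 statements merged into one kernel-verified Lean document; each statement's English description precedes it below -/
import Mathlib

section
/- Let Γ be a nontrivial finite cyclic group of order n. Then the group Γ × ℤ_n (≅ ℤ_n × ℤ_n) is not isomorphic to any group admitting a presentation with k+1 generators and k+1 relations for any k ≥ 0. -/
/-!
For a presentation `F / N` of a finite group with as many relators `rᵢ` as generators, `N` is
central modulo `⁅F, N⁆`, so `N / ⁅F, N⁆` is generated by the images of the `rᵢ` and maps to the
abelianization `ℤ^ι` of `F` through the relation matrix. Its image contains `|F / N| • ℤ^ι`, so
the square relation matrix is injective, hence `N ∩ ⁅F, F⁆ ≤ ⁅F, N⁆`: the Schur multiplier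
vanishes (Hopf's formula).

For `ℤ_n × ℤ_n` this fails: lift `F → ℤ_n × ℤ_n` to the Heisenberg group over `ℤ_n`, a central
extension. `N` maps into the centre, so `⁅F, N⁆` dies, while the commutator of lifts of the two
generators lies in `N ∩ ⁅F, F⁆` and maps to a nontrivial central element.
-/

open Function Subgroup
open scoped commutatorElement

namespace Subgroup

variable {G E : Type*} [Group G] [Group E]

theorem normalClosure_eq_closure_of_subset_center {s : Set G} (hs : s ⊆ center G) :
    normalClosure s = closure s := by
  refine le_antisymm (closure_mono fun x hx => ?_) closure_le_normalClosure
  obtain ⟨a, ha, hax⟩ := Group.mem_conjugatesOfSet_iff.mp hx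
  rwa [← IsConj.eq_of_left_mem_center hax (hs ha)]

theorem mk_mem_center_of_mem {H : Subgroup G} [H.Normal] {x : G} (hx : x ∈ H) :
    (x : G ⧸ ⁅(⊤ : Subgroup G), H⁆) ∈ center (G ⧸ ⁅(⊤ : Subgroup G), H⁆) := by
  rw [mem_center_iff]
  intro q
  obtain ⟨g, rfl⟩ := QuotientGroup.mk_surjective q
  exact commutatorElement_eq_one_iff_mul_comm.mp
    ((QuotientGroup.eq_one_iff _).mpr (commutator_mem_commutator (mem_top g) hx))

theorem commutator_le_ker_of_forall_apply_mem_center (φ : G →* E) (H₁ H₂ : Subgroup G)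
    (h : ∀ x ∈ H₂, φ x ∈ center E) : ⁅H₁, H₂⁆ ≤ φ.ker := by
  rw [commutator_le]
  intro x₁ _ x₂ hx₂
  rw [MonoidHom.mem_ker, map_commutatorElement, commutatorElement_eq_one_iff_mul_comm]
  exact (mem_center_iff.mp (h x₂ hx₂) (φ x₁))

end Subgroup

theorem LinearMap.injective_of_forall_smul_mem_range {R ι : Type*} [CommRing R] [IsDomain R]
    [Fintype ι] [DecidableEq ι] (f : (ι → R) →ₗ[R] ι → R) {m : R} (hm : m ≠ 0)
    (h : ∀ x, m • x ∈ LinearMap.range f) : Injective f := by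
  rw [← Matrix.toLin'_toMatrix' f, ← LinearMap.ker_eq_bot, LinearMap.ker_eq_bot']
  set M := LinearMap.toMatrix' f
  by_contra! ⟨v, hMv, hv0⟩
  obtain ⟨u, hu0, huM⟩ := Matrix.exists_vecMul_eq_zero_iff.mpr
    (Matrix.exists_mulVec_eq_zero_iff.mp ⟨v, hv0, hMv⟩)
  refine hu0 (funext fun j => ?_)
  obtain ⟨b, hb⟩ := h (Pi.single j 1)
  have : u ⬝ᵥ (m • Pi.single j 1) = 0 := by
    rw [← hb, ← Matrix.toLin'_toMatrix' f, Matrix.toLin'_apply, Matrix.dotProduct_mulVec, huM,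
      zero_dotProduct]
  simpa [hm] using this

namespace FreeGroup

variable {ι : Type*}

def expVec (ι : Type*) [DecidableEq ι] : FreeGroup ι →* Multiplicative (ι → ℤ) :=
  FreeGroup.lift fun i => Multiplicative.ofAdd (Pi.single i 1)

theorem expVec_surjective [DecidableEq ι] [Fintype ι] : Surjective (expVec ι) := by
  intro x
  have hsingle : ∀ i, Multiplicative.ofAdd (Pi.single i 1 : ι → ℤ) ∈ (expVec ι).range :=
    fun i => ⟨of i, lift_apply_of⟩
  have hx : x = ∏ i, Multiplicative.ofAdd (Pi.single i 1 : ι → ℤ) ^ (x.toAdd i) := by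
    apply Multiplicative.toAdd.injective
    ext j
    simp [toAdd_prod, Finset.sum_apply, Pi.single_apply]
  rw [← MonoidHom.mem_range, hx]
  exact prod_mem fun i _ => zpow_mem (hsingle i) _

section Relators

variable (r : ι → FreeGroup ι)

local notation "N" => normalClosure (Set.range r)
local notation "Q" => FreeGroup ι ⧸ ⁅(⊤ : Subgroup (FreeGroup ι)), N⁆

theorem relator_mem_center (i : ι) : ((r i : FreeGroup ι) : Q) ∈ center Q :=
  mk_mem_center_of_mem (subset_normalClosure (Set.mem_range_self i))

noncomputable def expVecQuot [DecidableEq ι] : Q →* Multiplicative (ι → ℤ) :=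
  QuotientGroup.lift _ (expVec ι) fun _ hx =>
    Abelianization.commutator_subset_ker _ (commutator_mono le_top le_top hx)

variable [Fintype ι]

noncomputable def relatorProd : (ι → Multiplicative ℤ) →* Q :=
  MonoidHom.noncommPiCoprod (fun i => zpowersHom Q (r i : Q)) <| by
    intro i _ _ _ _
    simp only [zpowersHom_apply]
    exact Commute.zpow_zpow (mem_center_iff.mp (relator_mem_center r i) _).symm _ _

theorem mk_mem_range_relatorProd {y : FreeGroup ι} (hy : y ∈ N) :
    (y : Q) ∈ (relatorProd r).range := by
  let π := QuotientGroup.mk' ⁅(⊤ : Subgroup (FreeGroup ι)), N⁆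
  have hN : Subgroup.map π N = closure (Set.range (π ∘ r)) := by
    rw [map_normalClosure _ _ (QuotientGroup.mk'_surjective _), ← Set.range_comp,
      normalClosure_eq_closure_of_subset_center (s := Set.range (π ∘ r))]
    exact Set.range_subset_iff.mpr (relator_mem_center r)
  have hle : closure (Set.range (π ∘ r)) ≤ (relatorProd r).range := by
    refine le_trans ?_ (MonoidHom.noncommPiCoprod_range _).ge
    rw [closure_le, Set.range_subset_iff]
    exact fun i => mem_iSup_of_mem i ⟨.ofAdd 1, by simp [π]⟩
  exact hle (hN ▸ mem_map_of_mem _ hy)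

variable [DecidableEq ι]

-- The relation matrix of the presentation: `a ↦ ∑ i, a i • (abelianization of r i)`.
noncomputable def relatorMap : (ι → ℤ) →+ (ι → ℤ) :=
  AddMonoidHom.toMultiplicative.symm
    (((expVecQuot r).comp (relatorProd r)).comp (MulEquiv.piMultiplicative _).toMonoidHom)

theorem ofAdd_relatorMap (a : ι → Multiplicative ℤ) :
    Multiplicative.ofAdd (relatorMap r (fun i => (a i).toAdd)) = expVecQuot r (relatorProd r a) :=
  rfl

theorem relatorMap_injective [Finite (FreeGroup ι ⧸ N)] : Injective (relatorMap r) := by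
  refine (relatorMap r).toIntLinearMap.injective_of_forall_smul_mem_range
    (m := Nat.card (FreeGroup ι ⧸ N)) (Nat.cast_ne_zero.mpr Nat.card_pos.ne') fun x => ?_
  obtain ⟨f, hf⟩ := expVec_surjective (Multiplicative.ofAdd x)
  have hfN : f ^ Nat.card (FreeGroup ι ⧸ N) ∈ N := by
    rw [← QuotientGroup.eq_one_iff, QuotientGroup.mk_pow]
    exact pow_card_eq_one'
  obtain ⟨a, ha⟩ := mk_mem_range_relatorProd r hfN
  refine ⟨fun i => (a i).toAdd, Multiplicative.ofAdd.injective ?_⟩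
  rw [AddMonoidHom.coe_toIntLinearMap, ofAdd_relatorMap, ha]
  show expVec ι _ = _
  rw [map_pow, hf, natCast_zsmul, ofAdd_nsmul]

theorem normalClosure_inf_commutator_le [Finite (FreeGroup ι ⧸ N)] :
    N ⊓ commutator (FreeGroup ι) ≤ ⁅(⊤ : Subgroup (FreeGroup ι)), N⁆ := by
  rintro w ⟨hwN, hw⟩
  obtain ⟨a, ha⟩ := mk_mem_range_relatorProd r hwN
  have ha1 : a = 1 := by
    have : relatorMap r (fun i => (a i).toAdd) = 0 := by
      apply Multiplicative.ofAdd.injective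
      rw [ofAdd_relatorMap, ha]
      exact Abelianization.commutator_subset_ker (expVec ι) hw
    funext i
    exact congrFun ((injective_iff_map_eq_zero _).mp (relatorMap_injective r) _ this) i
  rw [← QuotientGroup.eq_one_iff, ← ha, ha1, _root_.map_one]

end Relators

end FreeGroup

-- `⟨a, b, c⟩` is the unitriangular matrix `[[1, a, c], [0, 1, b], [0, 0, 1]]`.
@[ext]
structure HeisenbergGroup (R : Type*) where
  a : R
  b : R
  c : R

namespace HeisenbergGroup

variable {R : Type*} [CommRing R]

instance : Mul (HeisenbergGroup R) := ⟨fun x y => ⟨x.a + y.a, x.b + y.b, x.c + y.c + x.a * y.b⟩⟩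
instance : One (HeisenbergGroup R) := ⟨⟨0, 0, 0⟩⟩
instance : Inv (HeisenbergGroup R) := ⟨fun x => ⟨-x.a, -x.b, -x.c + x.a * x.b⟩⟩

@[simp] theorem mul_a (x y : HeisenbergGroup R) : (x * y).a = x.a + y.a := rfl
@[simp] theorem mul_b (x y : HeisenbergGroup R) : (x * y).b = x.b + y.b := rfl
@[simp] theorem mul_c (x y : HeisenbergGroup R) : (x * y).c = x.c + y.c + x.a * y.b := rfl
@[simp] theorem one_a : (1 : HeisenbergGroup R).a = 0 := rfl
@[simp] theorem one_b : (1 : HeisenbergGroup R).b = 0 := rfl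
@[simp] theorem one_c : (1 : HeisenbergGroup R).c = 0 := rfl
@[simp] theorem inv_a (x : HeisenbergGroup R) : x⁻¹.a = -x.a := rfl
@[simp] theorem inv_b (x : HeisenbergGroup R) : x⁻¹.b = -x.b := rfl
@[simp] theorem inv_c (x : HeisenbergGroup R) : x⁻¹.c = -x.c + x.a * x.b := rfl

instance : Group (HeisenbergGroup R) where
  mul_assoc x y z := by ext <;> simp <;> ring
  one_mul x := by ext <;> simp
  mul_one x := by ext <;> simp
  inv_mul_cancel x := by ext <;> simp

theorem commutatorElement_c (x y : HeisenbergGroup R) : ⁅x, y⁆.c = x.a * y.b - y.a * x.b := by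
  simp only [commutatorElement_def, mul_c, mul_a, inv_a, inv_b, inv_c]
  ring

def proj (R : Type*) [CommRing R] : HeisenbergGroup R →* Multiplicative R × Multiplicative R where
  toFun x := (.ofAdd x.a, .ofAdd x.b)
  map_one' := rfl
  map_mul' _ _ := rfl

@[simp] theorem proj_apply (x : HeisenbergGroup R) : proj R x = (.ofAdd x.a, .ofAdd x.b) := rfl

theorem proj_surjective : Surjective (proj R) :=
  fun y => ⟨⟨y.1.toAdd, y.2.toAdd, 0⟩, rfl⟩

theorem ker_proj_le_center : (proj R).ker ≤ center (HeisenbergGroup R) := by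
  intro z hz
  simp only [MonoidHom.mem_ker, proj_apply, Prod.mk_eq_one, ofAdd_eq_one] at hz
  rw [mem_center_iff]
  intro x
  ext <;> simp [hz.1, hz.2]
  ring

end HeisenbergGroup

theorem FreeGroup.exists_comp_eq {α G E : Type*} [Group G] [Group E] {p : E →* G}
    (hp : Surjective p) (π : FreeGroup α →* G) : ∃ φ : FreeGroup α →* E, p.comp φ = π :=
  ⟨FreeGroup.lift fun i => surjInv hp (π (.of i)),
    FreeGroup.ext_hom _ _ fun i => by simp [surjInv_eq hp]⟩

theorem not_ker_inf_commutator_le {α R : Type*} [CommRing R] [Nontrivial R]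
    {π : FreeGroup α →* Multiplicative R × Multiplicative R} (hπ : Surjective π) :
    ¬ π.ker ⊓ commutator (FreeGroup α) ≤ ⁅(⊤ : Subgroup (FreeGroup α)), π.ker⁆ := by
  intro h
  obtain ⟨φ, hφ⟩ := FreeGroup.exists_comp_eq HeisenbergGroup.proj_surjective π
  have hker : ⁅(⊤ : Subgroup (FreeGroup α)), π.ker⁆ ≤ φ.ker :=
    commutator_le_ker_of_forall_apply_mem_center φ _ _ fun y hy =>
      HeisenbergGroup.ker_proj_le_center (by rwa [MonoidHom.mem_ker, ← MonoidHom.comp_apply, hφ])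
  obtain ⟨f₁, hf₁⟩ := hπ (.ofAdd 1, 1)
  obtain ⟨f₂, hf₂⟩ := hπ (1, .ofAdd 1)
  have ha f : (φ f).a = (π f).1.toAdd := by simp [← hφ]
  have hb f : (φ f).b = (π f).2.toAdd := by simp [← hφ]
  have hw : ⁅f₁, f₂⁆ ∈ π.ker ⊓ commutator (FreeGroup α) := by
    refine mem_inf.mpr ⟨?_, commutator_mem_commutator (mem_top _) (mem_top _)⟩
    rw [MonoidHom.mem_ker, map_commutatorElement, commutatorElement_eq_one_iff_mul_comm, mul_comm]
  have hc := congrArg HeisenbergGroup.c (hker (h hw))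
  rw [map_commutatorElement, HeisenbergGroup.commutatorElement_c, ha, hb, ha, hb, hf₁, hf₂] at hc
  simp at hc

/-- Let `Γ` be a nontrivial finite cyclic group of order `n`. Then
`Γ × ℤ_n` (≅ `ℤ_n × ℤ_n`) is not isomorphic to any group admitting a presentation with
`k + 1` generators and `k + 1` relations, for any `k ≥ 0`. -/
theorem stmt_3 {Γ : Type*} [Group Γ] [Finite Γ] [IsCyclic Γ] [Nontrivial Γ]
    (n : ℕ) (hn : Nat.card Γ = n)
    (k : ℕ) (r : Fin (k + 1) → FreeGroup (Fin (k + 1))) :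
    ¬ Nonempty ((Γ × Multiplicative (ZMod n)) ≃*
      FreeGroup (Fin (k + 1)) ⧸ Subgroup.normalClosure (Set.range r)) := by
  rintro ⟨e⟩
  subst hn
  have : Fact (1 < Nat.card Γ) := ⟨Finite.one_lt_card⟩
  have : Finite (FreeGroup (Fin (k + 1)) ⧸ normalClosure (Set.range r)) :=
    Finite.of_equiv _ e.toEquiv
  let π := ((zmodCyclicMulEquiv ‹IsCyclic Γ›).prodCongr (MulEquiv.refl _)).symm.toMonoidHom.comp
    (e.symm.toMonoidHom.comp (QuotientGroup.mk' (normalClosure (Set.range r))))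
  have hπ : Surjective π := by
    simp only [π, MonoidHom.coe_comp, MulEquiv.coe_toMonoidHom]
    exact (MulEquiv.surjective _).comp
      ((MulEquiv.surjective _).comp (QuotientGroup.mk'_surjective _))
  have hker : π.ker = normalClosure (Set.range r) := by simp [π]
  exact not_ker_inf_commutator_le hπ (hker ▸ FreeGroup.normalClosure_inf_commutator_le r)
end

section
/- Let G and H be groups and let i : G → G * H, j : H → G * H be the canonical inclusions into the free product. Let N be a normal subgroup of G * H, let G' = i^{-1}(N), and let N' be the normal closure of i(G') in G * H. Then (G * H)/N is isomorphic to the quotient of ((G/G') * H) by the image of N under the natural surjection G * H → (G/G') * H. -/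
/-!
The map `π : G ∗ H → (G/G') ∗ H` is surjective, and its kernel lies in `N`: since `G'` already
dies in `(G ∗ H)/N`, the quotient map `G ∗ H → (G ∗ H)/N` factors through `π`. Hence the
normal closure of `π(N)` is just `π(N)`, whose preimage under `π` is `N ⊔ ker π = N`.
-/

open Monoid

namespace Monoid.Coprod

variable {G G₁ H H₁ : Type*} [Group G] [Group G₁] [Group H] [Group H₁]

theorem map_surjective {f : G →* G₁} {g : H →* H₁} (hf : Function.Surjective f)
    (hg : Function.Surjective g) : Function.Surjective (map f g) := by
  rw [← MonoidHom.range_eq_top, range_eq, map_comp_inl, map_comp_inr, MonoidHom.range_comp,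
    MonoidHom.range_comp, MonoidHom.range_eq_top_of_surjective f hf,
    MonoidHom.range_eq_top_of_surjective g hg, ← MonoidHom.range_eq_map,
    ← MonoidHom.range_eq_map, range_inl_sup_range_inr]

theorem ker_map_mk'_le {N : Subgroup (G ∗ H)} [N.Normal] {G' : Subgroup G} [G'.Normal]
    (hG' : G' ≤ N.comap inl) : (map (QuotientGroup.mk' G') (.id H)).ker ≤ N := by
  let ψ : (G ⧸ G') ∗ H →* (G ∗ H) ⧸ N :=
    lift (QuotientGroup.lift G' ((QuotientGroup.mk' N).comp inl) fun g hg => by simpa using hG' hg)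
      ((QuotientGroup.mk' N).comp inr)
  have hψ : ψ.comp (map (QuotientGroup.mk' G') (.id H)) = QuotientGroup.mk' N :=
    hom_ext rfl rfl
  rw [← QuotientGroup.ker_mk' N, ← hψ, ← MonoidHom.comap_ker]
  exact MonoidHom.ker_le_comap _ _

end Monoid.Coprod

theorem QuotientGroup.nonempty_mulEquiv_quotient_normalClosure_image {A B : Type*} [Group A]
    [Group B] {f : A →* B} (hf : Function.Surjective f) {N : Subgroup A} [hN : N.Normal]
    (hker : f.ker ≤ N) :
    Nonempty ((A ⧸ N) ≃* B ⧸ Subgroup.normalClosure (f '' (N : Set A))) := by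
  have : (N.map f).Normal := hN.map f hf
  have hclosure : Subgroup.normalClosure (f '' (N : Set A)) = N.map f := by
    rw [← Subgroup.coe_map, Subgroup.normalClosure_eq_self]
  refine ⟨QuotientGroup.liftEquiv N (φ := (QuotientGroup.mk' _).comp f)
    ((QuotientGroup.mk'_surjective _).comp hf) ?_⟩
  rw [← MonoidHom.comap_ker, QuotientGroup.ker_mk', hclosure, Subgroup.comap_map_eq_self hker]

/-- Let `G`, `H` be groups and `i : G →* G ∗ H` the canonical inclusion into the
free product. Let `N` be a normal subgroup of `G ∗ H`, let `G' = i⁻¹(N)`, and let `N'` be the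
normal closure of `i(G')` in `G ∗ H` (the kernel of the natural surjection
`π : G ∗ H →* (G/G') ∗ H`). Then `(G ∗ H)/N` is isomorphic to the quotient of `(G/G') ∗ H` by
the image of `N` under `π` (equivalently, by its normal closure, since `π` is surjective). -/
theorem stmt_6 {G H : Type*} [Group G] [Group H]
    (N : Subgroup (Monoid.Coprod G H)) [N.Normal]
    (G' : Subgroup G)
    (hG' : G' = N.comap (Monoid.Coprod.inl : G →* Monoid.Coprod G H))
    [G'.Normal]
    (π : Monoid.Coprod G H →* Monoid.Coprod (G ⧸ G') H)
    (hπ : π = Monoid.Coprod.map (QuotientGroup.mk' G') (MonoidHom.id H)) :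
    Nonempty ((Monoid.Coprod G H ⧸ N) ≃*
      (Monoid.Coprod (G ⧸ G') H) ⧸ Subgroup.normalClosure (π '' (N : Set (Monoid.Coprod G H)))) := by
  subst hπ
  exact QuotientGroup.nonempty_mulEquiv_quotient_normalClosure_image
    (Monoid.Coprod.map_surjective (QuotientGroup.mk'_surjective G') Function.surjective_id)
    (Monoid.Coprod.ker_map_mk'_le hG'.le)
end

section
/- Every surjective group homomorphism from ℤ_m * ℤ^{*k} onto Γ × ℤ, where Γ is finite cyclic and m ≥ 1, whose kernel is the normal closure of k−1 elements, yields for every n ≥ 1 a presentation of Γ × ℤ_n with k+1 generators and k+1 relations. -/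
/-!
Pull `φ` back along the presentation `F_{k+1} → ℤ_m ∗ F_k` whose kernel is normally generated by
`x₀ ^ m`, and push it forward along the reduction `Γ × ℤ → Γ × ℤ_n`, whose kernel is normally
generated by `(1, 1) ^ n`. Preimages under a surjection of normally generated subgroups are
normally generated by lifts of the generators together with generators of the kernel, so the
composite `F_{k+1} → Γ × ℤ_n` has kernel normally generated by `x₀ ^ m`, `τ ^ n` for a lift `τ`
of `(1, 1)`, and lifts of the `k - 1` relators: `k + 1` relators in all. For `k = 0` the source
is the finite group `ℤ_m`, so no such `φ` exists.
-/

open Function Subgroup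

section

variable {G H : Type*} [Group G] [Group H]

theorem Subgroup.comap_normalClosure_image_of_surjective {f : G →* H} (hf : Surjective f)
    {R : Set G} (hR : f.ker = normalClosure R) (T : Set G) :
    (normalClosure (f '' T)).comap f = normalClosure (R ∪ T) := by
  rw [← map_normalClosure T f hf, comap_map_eq, hR, normalClosure_union, sup_comm]

theorem MonoidHom.ker_eq_of_comp_eq_mk' {f : G →* H} {N : Subgroup G} [N.Normal]
    (hN : N ≤ f.ker) (σ : H →* G ⧸ N) (hσ : σ.comp f = QuotientGroup.mk' N) : f.ker = N := by
  refine le_antisymm (fun g hg => ?_) hN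
  rw [← QuotientGroup.ker_mk' N, ← hσ, ← MonoidHom.comap_ker]
  exact MonoidHom.mem_ker.2 (by rw [MonoidHom.mem_ker.1 hg, map_one])

def ZMod.mulLift {m : ℕ} (x : G) (hx : x ^ m = 1) : Multiplicative (ZMod m) →* G :=
  (ZMod.lift m ⟨zmultiplesHom (Additive G) (Additive.ofMul x), by
    simpa [zmultiplesHom] using congrArg Additive.ofMul hx⟩).toMultiplicativeLeft

@[simp]
theorem ZMod.mulLift_ofAdd_one {m : ℕ} (x : G) (hx : x ^ m = 1) :
    ZMod.mulLift x hx (Multiplicative.ofAdd 1) = x := by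
  simp only [ZMod.mulLift, AddMonoidHom.toMultiplicativeLeft_apply_apply, toAdd_ofAdd]
  rw [← Int.cast_one, ZMod.lift_coe]
  simp

instance Monoid.Coprod.finite_freeGroup_of_isEmpty {M ι : Type*} [Monoid M] [Finite M]
    [IsEmpty ι] : Finite (Monoid.Coprod M (FreeGroup ι)) :=
  .of_equiv _ ((MulEquiv.coprodCongr (.refl M) (.ofUnique : FreeGroup ι ≃* Unit)).trans
    (MulEquiv.coprodPUnit M)).symm.toEquiv

end

def freeGroupToZModCoprod (m k : ℕ) :
    FreeGroup (Fin (k + 1)) →* Monoid.Coprod (Multiplicative (ZMod m)) (FreeGroup (Fin k)) :=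
  FreeGroup.lift (Fin.cases (Monoid.Coprod.inl (.ofAdd 1)) fun j => Monoid.Coprod.inr (.of j))

namespace freeGroupToZModCoprod

variable (m k : ℕ)

@[simp]
theorem of_zero : freeGroupToZModCoprod m k (.of 0) = Monoid.Coprod.inl (.ofAdd 1) := by
  simp [freeGroupToZModCoprod]

@[simp]
theorem of_succ (j : Fin k) :
    freeGroupToZModCoprod m k (.of j.succ) = Monoid.Coprod.inr (.of j) := by
  simp [freeGroupToZModCoprod]

theorem comp_map_succ :
    (freeGroupToZModCoprod m k).comp (FreeGroup.map Fin.succ) = Monoid.Coprod.inr := by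
  ext j
  simp

theorem surjective : Surjective (freeGroupToZModCoprod m k) := by
  rw [← MonoidHom.range_eq_top, eq_top_iff, ← Monoid.Coprod.range_inl_sup_range_inr, sup_le_iff]
  constructor
  · rintro _ ⟨a, rfl⟩
    obtain ⟨z, hz⟩ := ZMod.intCast_surjective a.toAdd
    refine ⟨.of 0 ^ z, ?_⟩
    rw [map_zpow, of_zero, ← map_zpow, ← ofAdd_zsmul, zsmul_one, hz, ofAdd_toAdd]
  · rw [← comp_map_succ]
    rintro _ ⟨x, rfl⟩
    exact ⟨_, rfl⟩

theorem ker : (freeGroupToZModCoprod m k).ker = normalClosure {.of 0 ^ m} := by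
  set N := normalClosure {(FreeGroup.of 0 : FreeGroup (Fin (k + 1))) ^ m}
  have hx : (QuotientGroup.mk (.of 0) : FreeGroup (Fin (k + 1)) ⧸ N) ^ m = 1 :=
    (QuotientGroup.eq_one_iff _).2 (subset_normalClosure (Set.mem_singleton _))
  refine MonoidHom.ker_eq_of_comp_eq_mk' (normalClosure_le_normal ?_)
    (Monoid.Coprod.lift (ZMod.mulLift _ hx) ((QuotientGroup.mk' N).comp (FreeGroup.map Fin.succ))) ?_
  · rw [Set.singleton_subset_iff, SetLike.mem_coe, MonoidHom.mem_ker, map_pow, of_zero, ← map_pow,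
      ← ofAdd_nsmul, nsmul_one, ZMod.natCast_self, ofAdd_zero, map_one]
  · ext i
    cases i using Fin.cases <;> simp

end freeGroupToZModCoprod

theorem ker_prodMap_id_intCast (Γ : Type*) [Group Γ] (n : ℕ) :
    ((MonoidHom.id Γ).prodMap (Int.castAddHom (ZMod n)).toMultiplicative).ker =
      normalClosure {((1 : Γ), Multiplicative.ofAdd (1 : ℤ)) ^ n} := by
  refine le_antisymm ?_ (normalClosure_le_normal (by simp))
  rintro ⟨g, z⟩ hgz
  obtain ⟨rfl, hz⟩ : g = 1 ∧ ((z.toAdd : ℤ) : ZMod n) = 0 := by simpa using hgz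
  obtain ⟨j, hj⟩ := (ZMod.intCast_zmod_eq_zero_iff_dvd _ n).1 hz
  have : ((1 : Γ), z) = (((1 : Γ), Multiplicative.ofAdd (1 : ℤ)) ^ n) ^ j := by
    ext
    · simp
    · simp [hj, mul_comm]
  rw [this]
  exact zpow_mem (subset_normalClosure (Set.mem_singleton _)) j

theorem stmt_7_general {Γ : Type*} [Group Γ]
    (m k : ℕ) (hm : 1 ≤ m)
    (φ : Monoid.Coprod (Multiplicative (ZMod m)) (FreeGroup (Fin k)) →* Γ × Multiplicative ℤ)
    (hφ : Function.Surjective φ)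
    (r : Fin (k - 1) → Monoid.Coprod (Multiplicative (ZMod m)) (FreeGroup (Fin k)))
    (hker : φ.ker = Subgroup.normalClosure (Set.range r)) :
    ∀ n : ℕ, 1 ≤ n →
      ∃ s : Fin (k + 1) → FreeGroup (Fin (k + 1)),
        Nonempty ((Γ × Multiplicative (ZMod n)) ≃*
          FreeGroup (Fin (k + 1)) ⧸ Subgroup.normalClosure (Set.range s)) := by
  intro n _
  obtain ⟨k, rfl⟩ : ∃ k', k = k' + 1 := Nat.exists_eq_succ_of_ne_zero <| by
    rintro rfl
    have : NeZero m := ⟨by omega⟩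
    have := Finite.of_surjective φ hφ
    exact not_finite (Γ × Multiplicative ℤ)
  set ρ := freeGroupToZModCoprod m (k + 1)
  have hρ := freeGroupToZModCoprod.surjective m (k + 1)
  obtain ⟨τ, hτ⟩ : ∃ τ, φ (ρ τ) = (1, .ofAdd 1) := hφ.comp hρ _
  choose r' hr' using fun j => hρ (r j)
  let ψ := ((MonoidHom.id Γ).prodMap (Int.castAddHom (ZMod n)).toMultiplicative).comp (φ.comp ρ)
  have hψ : Surjective ψ :=
    (surjective_id.prodMap (ZMod.intCast_surjective (n := n))).comp (hφ.comp hρ)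
  have hkerψ : ψ.ker = normalClosure (Set.range (Fin.cons (.of 0 ^ m) (Fin.cons (τ ^ n) r'))) := by
    have hrels : Set.range r ∪ {ρ τ ^ n} = ρ '' (Set.range r' ∪ {τ ^ n}) := by
      rw [Set.image_union, Set.image_singleton, map_pow, ← Set.range_comp,
        show ρ ∘ r' = r from funext hr']
    rw [← MonoidHom.comap_ker, ← comap_comap, ker_prodMap_id_intCast, ← hτ, ← map_pow,
      ← Set.image_singleton, comap_normalClosure_image_of_surjective hφ hker, hrels,
      comap_normalClosure_image_of_surjective hρ (freeGroupToZModCoprod.ker m (k + 1)),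
      Fin.range_cons, Fin.range_cons, Set.singleton_union, Set.union_singleton]
  exact ⟨_, ⟨(QuotientGroup.quotientKerEquivOfSurjective ψ hψ).symm.trans
    (QuotientGroup.quotientMulEquivOfEq hkerψ)⟩⟩

/-- Every surjective group homomorphism from `ℤ_m ∗ ℤ^{*k}` onto `Γ × ℤ`,
where `Γ` is finite cyclic and `m ≥ 1`, whose kernel is the normal closure of `k - 1` elements,
yields for every `n ≥ 1` a presentation of `Γ × ℤ_n` with `k + 1` generators and
`k + 1` relations. -/
theorem stmt_7 {Γ : Type*} [Group Γ] [Finite Γ] [IsCyclic Γ]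
    (m k : ℕ) (hm : 1 ≤ m)
    (φ : Monoid.Coprod (Multiplicative (ZMod m)) (FreeGroup (Fin k)) →* Γ × Multiplicative ℤ)
    (hφ : Function.Surjective φ)
    (r : Fin (k - 1) → Monoid.Coprod (Multiplicative (ZMod m)) (FreeGroup (Fin k)))
    (hker : φ.ker = Subgroup.normalClosure (Set.range r)) :
    ∀ n : ℕ, 1 ≤ n →
      ∃ s : Fin (k + 1) → FreeGroup (Fin (k + 1)),
        Nonempty ((Γ × Multiplicative (ZMod n)) ≃*
          FreeGroup (Fin (k + 1)) ⧸ Subgroup.normalClosure (Set.range s)) :=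
  stmt_7_general m k hm φ hφ r hker
end
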